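/- Define Γ*(z) = Γ(z)/(√(2π) z^{z-1/2} e^{-z}). Then for all z with 0 < arg z < π (or by continuity on appropriate domains), Γ*(z) = (1/(1 - e^{2πiz})) · (1/Γ*(z e^{-πi})), where z e^{-πi} denotes z rotated by -π (with |arg(z e^{-πi})| < π). -/

import Mathlib

open Real

noncomputable def GammaStar (z : ℂ) : ℂ :=
  Complex.Gamma z / (Real.sqrt (2 * π) * z ^ (z - 1/2) * Complex.exp (-z))

theorem stmt10 (z : ℂ) (h1 : 0 < z.arg) (h2 : z.arg < π) :
    GammaStar z
      = (1 - Complex.exp (2 * π * Complex.I * z))⁻¹ *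
        (GammaStar (z * Complex.exp (-(π : ℂ) * Complex.I)))⁻¹ := by
  -- basic facts
  have him : 0 < z.im := by
    rcases lt_or_eq_of_le (Complex.arg_nonneg_iff.1 h1.le) with h | h
    · exact h
    · exfalso
      rcases le_or_gt 0 z.re with hre | hre
      · have : z.arg = 0 := Complex.arg_eq_zero_iff.2 ⟨hre, h.symm⟩
        rw [this] at h1; exact lt_irrefl 0 h1
      · have : z.arg = π := Complex.arg_eq_pi_iff.2 ⟨hre, h.symm⟩
        exact absurd this (ne_of_lt h2)
  have hz0 : z ≠ 0 := by
    intro h; rw [h] at him; simp at him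
  have hw : z * Complex.exp (-(π : ℂ) * Complex.I) = -z := by
    rw [show -(π : ℂ) * Complex.I = -(π * Complex.I) by ring, Complex.exp_neg,
      Complex.exp_pi_mul_I]
    norm_num
  set q := Complex.exp (2 * π * Complex.I * z) with hqdef
  set e := Complex.exp (π * Complex.I * z) with hedef
  have hq1 : 1 - q ≠ 0 := by
    intro h
    have h' : q = 1 := by linear_combination -h
    have habs : ‖q‖ = 1 := by rw [h']; simp
    rw [hqdef, Complex.norm_exp] at habs
    have hre : (2 * (π : ℂ) * Complex.I * z).re = -(2 * π * z.im) := by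
      simp [Complex.mul_re, Complex.mul_im]
    rw [hre] at habs
    have := (Real.exp_eq_one_iff _).1 habs
    nlinarith [Real.pi_pos]
  have hznat : ∀ m : ℕ, -z ≠ -(m : ℂ) := by
    intro m h
    have : z = (m : ℂ) := by linear_combination -h
    rw [this] at him; simp at him
  have hGnz : Complex.Gamma (-z) ≠ 0 := Complex.Gamma_ne_zero hznat
  have hsin : Complex.sin (π * z) ≠ 0 := by
    rw [Complex.sin_ne_zero_iff]
    intro k h
    have hπ : (π : ℂ) ≠ 0 := Complex.ofReal_ne_zero.2 Real.pi_ne_zero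
    have hzk : z = (k : ℂ) := mul_left_cancel₀ hπ (by linear_combination h)
    rw [hzk] at him; simp at him
  -- reflection formula rearranged
  have h1s : Complex.Gamma (1 - z) = -z * Complex.Gamma (-z) := by
    rw [show (1 : ℂ) - z = -z + 1 by ring, Complex.Gamma_add_one _ (neg_ne_zero.2 hz0)]
  have hA : Complex.Gamma z * (-z * Complex.Gamma (-z)) * Complex.sin (π * z) = π := by
    rw [← h1s, Complex.Gamma_mul_Gamma_one_sub z, div_mul_cancel₀ _ hsin]
  have hs : Complex.sin (π * z) * (2 * e) = (1 - q) * Complex.I := by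
    rw [Complex.sin, hedef, hqdef]
    have e1 : Complex.exp (-(π * z) * Complex.I) * Complex.exp (π * Complex.I * z) = 1 := by
      rw [← Complex.exp_add]; ring_nf; exact Complex.exp_zero
    have e2 : Complex.exp ((π : ℂ) * z * Complex.I) * Complex.exp (π * Complex.I * z)
        = Complex.exp (2 * π * Complex.I * z) := by
      rw [← Complex.exp_add]; ring_nf
    linear_combination Complex.I * e1 - Complex.I * e2
  have hI : (Complex.I : ℂ) ^ 2 = -1 := Complex.I_sq
  have key : Complex.Gamma z * Complex.Gamma (-z) * ((1 - q) * z) = 2 * π * Complex.I * e := by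
    linear_combination (2 * e * Complex.I) * hA
      + (Complex.Gamma z * Complex.Gamma (-z) * z * Complex.I) * hs
      - (Complex.Gamma z * Complex.Gamma (-z) * z * (1 - q)) * hI
      + (-(Complex.Gamma z * Complex.Gamma (-z) * q * z * 2)
         + Complex.Gamma z * Complex.Gamma (-z) * z * 2) * hI
  -- the power identity
  have hlog : Complex.log (-z) = Complex.log z - π * Complex.I := by
    rw [Complex.log, Complex.log, Complex.arg_neg_eq_arg_sub_pi_of_im_pos him, norm_neg]
    push_cast
    ring
  have hello : Complex.exp ((π : ℂ) * Complex.I / 2) = Complex.I := by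
    have h := Complex.exp_mul_I (x := (π : ℂ) / 2)
    rw [Complex.cos_pi_div_two, Complex.sin_pi_div_two] at h
    rw [show (π : ℂ) * Complex.I / 2 = (π : ℂ) / 2 * Complex.I by ring, h]
    simp
  have key2 : z ^ (z - 1/2) * (-z) ^ (-z - 1/2) * z = Complex.I * e := by
    rw [Complex.cpow_def_of_ne_zero hz0, Complex.cpow_def_of_ne_zero (neg_ne_zero.2 hz0), hlog,
      ← Complex.exp_add,
      show Complex.log z * (z - 1/2) + (Complex.log z - π * Complex.I) * (-z - 1/2)
        = -Complex.log z + π * Complex.I * z + π * Complex.I / 2 by ring,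
      Complex.exp_add, Complex.exp_add, Complex.exp_neg, Complex.exp_log hz0, hello, hedef]
    field_simp
  -- assemble
  have hc : (Real.sqrt (2 * π) : ℂ) * (Real.sqrt (2 * π) : ℂ) = 2 * π := by
    rw [← Complex.ofReal_mul, Real.mul_self_sqrt (by positivity)]
    push_cast; ring
  have hcne : (Real.sqrt (2 * π) : ℂ) ≠ 0 := by
    simp only [ne_eq, Complex.ofReal_eq_zero]
    positivity
  have ha : z ^ (z - 1/2) ≠ 0 := by
    rw [Complex.cpow_def_of_ne_zero hz0]; exact Complex.exp_ne_zero _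
  have hb : (-z) ^ (-z - 1/2) ≠ 0 := by
    rw [Complex.cpow_def_of_ne_zero (neg_ne_zero.2 hz0)]; exact Complex.exp_ne_zero _
  rw [hw]
  unfold GammaStar
  rw [neg_neg]
  have hez : Complex.exp (-z) * Complex.exp z = 1 := by
    rw [← Complex.exp_add]; simp
  have key3 : Complex.Gamma z * Complex.Gamma (-z) * (1 - q)
      = 2 * π * (z ^ (z - 1/2) * (-z) ^ (-z - 1/2)) :=
    mul_right_cancel₀ hz0 (by linear_combination key - 2 * (π : ℂ) * key2)
  have hS : ((Real.sqrt 2 : ℂ) * (Real.sqrt π : ℂ)) * ((Real.sqrt 2 : ℂ) * (Real.sqrt π : ℂ))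
      = 2 * π := by
    have h2π : Real.sqrt 2 * Real.sqrt π * (Real.sqrt 2 * Real.sqrt π) = 2 * π := by
      rw [show Real.sqrt 2 * Real.sqrt π * (Real.sqrt 2 * Real.sqrt π)
        = (Real.sqrt 2 * Real.sqrt 2) * (Real.sqrt π * Real.sqrt π) by ring,
        Real.mul_self_sqrt (by norm_num), Real.mul_self_sqrt Real.pi_pos.le]
    exact_mod_cast congrArg Complex.ofReal h2π
  field_simp
  rw [show (z * 2 - 1) / 2 = z - 1/2 from by ring, show (-(z * 2) - 1) / 2 = -z - 1/2 from by ring,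
    div_eq_iff ha]
  linear_combination key3
    - (z ^ (z - 1/2) * (-z) ^ (-z - 1/2) * Complex.exp z * Complex.exp (-z)) * hc
    - 2 * (π : ℂ) * (z ^ (z - 1/2) * (-z) ^ (-z - 1/2)) * hez
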